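/- arXiv:2409.17544 — 2 statements merged into one kernel-verified Lean document; each statement's English description precedes it below -/
import Mathlib

section
/- Let m ≥ 2, let ρ ∈ [−1,1], and let c be a WOMNI weight tensor that induces flat correlation. Then for every pair s1 ≠ s2 ∈ {1,…,m}, the induced correlation satisfies 𝔯(s1,s2) ≥ 3/4 + ρ/4 − (1−ρ)·( 11/(2m) + 24/m² ). -/
open Finset

/-- Cumulative weight `α(k,q) = ∑_ℓ c(q,k,ℓ)`. -/
noncomputable def alphaW (m : ℕ) (c : Fin m → Fin m → Fin m → ℝ) (k q : Fin m) : ℝ :=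
  ∑ ℓ, c q k ℓ

/-- `β_q(s1,s2) = α(s1,q) − α(s2,q)`. -/
noncomputable def betaW (m : ℕ) (c : Fin m → Fin m → Fin m → ℝ) (q s1 s2 : Fin m) : ℝ :=
  alphaW m c s1 q - alphaW m c s2 q

/-- WOMNI (weighted Omnibus) weight tensor. -/
def IsWOMNI (m : ℕ) (c : Fin m → Fin m → Fin m → ℝ) : Prop :=
  (∀ q i j, c q i j = c q j i) ∧
  (∀ q i j, q ≠ i → q ≠ j → c q i j = 0) ∧
  (∀ i, c i i i = 1) ∧
  (∀ q i, q ≠ i → c q i i = 0) ∧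
  (∀ i j, i ≠ j → c i i j ∈ Set.Icc (0:ℝ) 1 ∧ c i i j + c j i j = 1)

/-- The tensor induces flat correlation: `S(s1,s2) = ∑_q β_q(s1,s2)²` is the same
for all pairs `s1 ≠ s2`. -/
def InducesFlat (m : ℕ) (c : Fin m → Fin m → Fin m → ℝ) : Prop :=
  ∀ s1 s2 t1 t2 : Fin m, s1 ≠ s2 → t1 ≠ t2 →
    ∑ q, (betaW m c q s1 s2)^2 = ∑ q, (betaW m c q t1 t2)^2

/-! The diagonal cumulative weights `α(k,k) ≥ 1` sum to `m(m+1)/2`, so the two smallest of them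
are at most `(m+2)/2`. For such a pair `t₁ ≠ t₂` every `β_q(t₁,t₂)²` is at most `1`, except at
`q = t₁, t₂` where it is at most `α(q,q)²`; hence `S(t₁,t₂) ≤ m²/2 + 3m`, and by flatness the same
bound holds for every pair. This gives `𝔯 ≥ 3/4 + ρ/4 - 3(1-ρ)/(2m)`. -/

theorem Fintype.exists_ne_le_div_of_sum_eq {ι : Type*} [Fintype ι] [DecidableEq ι]
    (f : ι → ℝ) {a S : ℝ} (hcard : 2 ≤ Fintype.card ι) (ha : ∀ i, a ≤ f i)
    (hS : ∑ i, f i = S) :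
    ∃ t₁ t₂, t₁ ≠ t₂ ∧ f t₁ ≤ (S - a) / (Fintype.card ι - 1) ∧
      f t₂ ≤ (S - a) / (Fintype.card ι - 1) := by
  obtain ⟨t₁, -, ht₁⟩ := univ.exists_min_image f (univ_nonempty_iff.2 <|
    Fintype.card_pos_iff.1 (by omega))
  have hrest : (univ.erase t₁).Nonempty := by
    rw [← Finset.card_pos, card_erase_of_mem (mem_univ _), card_univ]; omega
  obtain ⟨t₂, ht₂mem, ht₂⟩ := (univ.erase t₁).exists_min_image f hrest
  have hpos : (0 : ℝ) < Fintype.card ι - 1 := by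
    have : (2 : ℝ) ≤ Fintype.card ι := by exact_mod_cast hcard
    linarith
  have hcard_rest : ((univ.erase t₁).card : ℝ) = Fintype.card ι - 1 := by
    rw [card_erase_of_mem (mem_univ _), card_univ, Nat.cast_pred (by omega)]
  have hsum_rest : (Fintype.card ι - 1) * f t₂ ≤ S - a := by
    calc (Fintype.card ι - 1) * f t₂ = (univ.erase t₁).card • f t₂ := by
          rw [nsmul_eq_mul, hcard_rest]
      _ ≤ ∑ i ∈ univ.erase t₁, f i := card_nsmul_le_sum _ _ _ ht₂
      _ = S - f t₁ := by rw [sum_erase_eq_sub (mem_univ _), hS]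
      _ ≤ S - a := by linarith [ha t₁]
  have h₂ : f t₂ ≤ (S - a) / (Fintype.card ι - 1) := by
    rwa [le_div_iff₀ hpos, mul_comm]
  exact ⟨t₁, t₂, (ne_of_mem_erase ht₂mem).symm, (ht₁ t₂ (mem_univ _)).trans h₂, h₂⟩

theorem betaW_sq_comm {m : ℕ} (c : Fin m → Fin m → Fin m → ℝ) (q s₁ s₂ : Fin m) :
    betaW m c q s₁ s₂ ^ 2 = betaW m c q s₂ s₁ ^ 2 := by
  unfold betaW; ring

namespace IsWOMNI

variable {m : ℕ} {c : Fin m → Fin m → Fin m → ℝ}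

theorem nonneg (hc : IsWOMNI m c) (i j : Fin m) : 0 ≤ c i i j := by
  rcases eq_or_ne i j with rfl | hij
  · rw [hc.2.2.1]; exact zero_le_one
  · exact (hc.2.2.2.2 i j hij).1.1

theorem le_one (hc : IsWOMNI m c) {i j : Fin m} (hij : i ≠ j) : c i i j ≤ 1 :=
  (hc.2.2.2.2 i j hij).1.2

theorem add_swap (hc : IsWOMNI m c) (k ℓ : Fin m) :
    c k k ℓ + c ℓ ℓ k = 1 + if k = ℓ then 1 else 0 := by
  rcases eq_or_ne k ℓ with rfl | hkℓ
  · rw [hc.2.2.1]; norm_num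
  · rw [if_neg hkℓ, hc.1 ℓ ℓ k, (hc.2.2.2.2 k ℓ hkℓ).2, add_zero]

theorem alphaW_of_ne (hc : IsWOMNI m c) {k q : Fin m} (h : k ≠ q) :
    alphaW m c k q = c q q k := by
  rw [alphaW, sum_eq_single_of_mem q (mem_univ q)
    fun ℓ _ hℓ ↦ hc.2.1 q k ℓ h.symm (Ne.symm hℓ)]
  exact hc.1 q k q

theorem one_le_alphaW_self (hc : IsWOMNI m c) (k : Fin m) : 1 ≤ alphaW m c k k :=
  calc (1 : ℝ) = c k k k := (hc.2.2.1 k).symm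
    _ ≤ alphaW m c k k :=
      single_le_sum (f := fun ℓ ↦ c k k ℓ) (fun ℓ _ ↦ hc.nonneg k ℓ) (mem_univ k)

theorem sum_alphaW_self (hc : IsWOMNI m c) :
    ∑ k, alphaW m c k k = (m : ℝ) * (m + 1) / 2 := by
  have hdouble : 2 * ∑ k, alphaW m c k k = ∑ k, ∑ ℓ, (c k k ℓ + c ℓ ℓ k) := by
    simp only [alphaW, sum_add_distrib, two_mul]
    rw [sum_comm (f := fun k ℓ ↦ c ℓ ℓ k)]
  simp only [hc.add_swap, sum_add_distrib, sum_ite_eq, mem_univ, if_true, sum_const,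
    card_univ, Fintype.card_fin, nsmul_eq_mul, mul_one] at hdouble
  linarith

theorem betaW_sq_le_one (hc : IsWOMNI m c) {q t₁ t₂ : Fin m} (h₁ : q ≠ t₁) (h₂ : q ≠ t₂) :
    betaW m c q t₁ t₂ ^ 2 ≤ 1 := by
  rw [betaW, hc.alphaW_of_ne h₁.symm, hc.alphaW_of_ne h₂.symm]
  have := hc.nonneg q t₁; have := hc.nonneg q t₂
  have := hc.le_one h₁; have := hc.le_one h₂
  nlinarith

theorem betaW_self_sq_le (hc : IsWOMNI m c) {t₁ t₂ : Fin m} (h : t₁ ≠ t₂) :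
    betaW m c t₁ t₁ t₂ ^ 2 ≤ alphaW m c t₁ t₁ ^ 2 := by
  rw [betaW, hc.alphaW_of_ne h.symm]
  have := hc.nonneg t₁ t₂; have := hc.le_one h; have := hc.one_le_alphaW_self t₁
  nlinarith

theorem sum_betaW_sq_le (hc : IsWOMNI m c) {t₁ t₂ : Fin m} (h : t₁ ≠ t₂) :
    ∑ q, betaW m c q t₁ t₂ ^ 2 ≤ alphaW m c t₁ t₁ ^ 2 + alphaW m c t₂ t₂ ^ 2 + (m - 2) := by
  have hrest : ∑ q, (betaW m c q t₁ t₂ ^ 2 - 1) ≤ ∑ q ∈ {t₁, t₂}, (betaW m c q t₁ t₂ ^ 2 - 1) :=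
    sum_le_sum_of_subset_of_nonpos' (subset_univ _) fun q _ hq ↦ by
      simp only [mem_insert, mem_singleton, not_or] at hq
      linarith [hc.betaW_sq_le_one hq.1 hq.2]
  rw [sum_pair h, sum_sub_distrib, sum_const, card_univ, Fintype.card_fin, nsmul_one] at hrest
  have h₁ := hc.betaW_self_sq_le h
  have h₂ := hc.betaW_self_sq_le h.symm
  rw [betaW_sq_comm] at h₂
  linarith

theorem sum_betaW_sq_le_of_flat (hc : IsWOMNI m c) (hflat : InducesFlat m c) (hm : 2 ≤ m)
    {s₁ s₂ : Fin m} (hs : s₁ ≠ s₂) :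
    ∑ q, betaW m c q s₁ s₂ ^ 2 ≤ (m : ℝ) ^ 2 / 2 + 3 * m := by
  obtain ⟨t₁, t₂, ht, h₁, h₂⟩ := Fintype.exists_ne_le_div_of_sum_eq (fun k ↦ alphaW m c k k)
    (by simpa using hm) hc.one_le_alphaW_self hc.sum_alphaW_self
  have hM : (1 : ℝ) < m := by exact_mod_cast hm
  have hmean : ((m : ℝ) * (m + 1) / 2 - 1) / (Fintype.card (Fin m) - 1) = (m + 2) / 2 := by
    rw [Fintype.card_fin, div_eq_iff (by linarith)]; ring
  rw [hmean] at h₁ h₂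
  have := hc.one_le_alphaW_self t₁; have := hc.one_le_alphaW_self t₂
  rw [hflat s₁ s₂ t₁ t₂ hs ht]
  nlinarith [hc.sum_betaW_sq_le ht]

end IsWOMNI

theorem stmt_5 (m : ℕ) (hm : 2 ≤ m) (ρ : ℝ) (hρ : ρ ∈ Set.Icc (-1 : ℝ) 1)
    (c : Fin m → Fin m → Fin m → ℝ) (hc : IsWOMNI m c) (hflat : InducesFlat m c)
    (s1 s2 : Fin m) (hs : s1 ≠ s2) :
    1 - ((1 - ρ) / (2 * (m : ℝ)^2)) * ∑ q, (betaW m c q s1 s2)^2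
      ≥ 3/4 + ρ/4 - (1 - ρ) * (11 / (2 * (m : ℝ)) + 24 / (m : ℝ)^2) := by
  have hM : (0 : ℝ) < m := by positivity
  have hρ' : 0 ≤ 1 - ρ := sub_nonneg.2 hρ.2
  have hS := mul_le_mul_of_nonneg_left (hc.sum_betaW_sq_le_of_flat hflat hm hs)
    (div_nonneg hρ' (by positivity : (0 : ℝ) ≤ 2 * m ^ 2))
  have hbound_eq : (1 - ρ) / (2 * (m : ℝ) ^ 2) * ((m : ℝ) ^ 2 / 2 + 3 * m)
      = (1 - ρ) * (1 / 4 + 3 / (2 * m)) := by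
    field_simp; ring
  have hweaker : (1 - ρ) * (3 / (2 * (m : ℝ))) ≤ (1 - ρ) * (11 / (2 * m) + 24 / m ^ 2) := by
    gcongr
    have : (0 : ℝ) ≤ 24 / m ^ 2 := by positivity
    linarith [div_le_div_of_nonneg_right (by norm_num : (3 : ℝ) ≤ 11) (by positivity : (0 : ℝ) ≤ 2 * m)]
  linarith
end

section
/- Let m ≥ 3 and define g : ℝ^m → ℝ by g(a) = ∑_{i<j} [ ((m−2)a_i + 1)² + ((m−2)a_j + 1)² + (m−2)(a_i − a_j)² ]. Then, over the affine set { a ∈ ℝ^m : ∑_{i=1}^m a_i = m(m+1)/2 }, the function g attains its minimum uniquely at the point a_i = (m+1)/2 for all i, and the minimum value is m³(m−1)³/4. That is, for every a ∈ ℝ^m with ∑_i a_i = m(m+1)/2 one has g(a) ≥ m³(m−1)³/4, with equality if and only if a_i = (m+1)/2 for every i. -/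
/-!
Centre the variables at `c = (m+1)/2`, writing `a i = c + x i` with `∑ x i = 0`. Summing the
objective over all ordered pairs and removing the diagonal turns it into the exact identity
`g(a) = m³(m-1)³/4 + (m-2)(m²-2m+2) ∑ (a i - c)²`, and the coefficient is positive for `m ≥ 3`.
-/

open Finset

section PairSums

variable {ι : Type*} [Fintype ι]

theorem sum_sum_symm_eq_two_nsmul_sum_lt_add_diag [LinearOrder ι] {M : Type*} [AddCommMonoid M]
    (f : ι → ι → M) (hf : ∀ i j, f i j = f j i) :
    ∑ i, ∑ j, f i j = 2 • (∑ i, ∑ j, if i < j then f i j else 0) + ∑ i, f i i := by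
  have hsplit : ∀ i j, f i j =
      ((if i < j then f i j else 0) + if j < i then f j i else 0) + if i = j then f i j else 0 := by
    intro i j
    rcases lt_trichotomy i j with h | rfl | h
    · simp [h, h.ne, h.not_gt]
    · simp
    · simp [h, h.ne', h.not_gt, hf i j]
  simp_rw [Finset.sum_congr rfl fun i _ => Finset.sum_congr rfl fun j _ => hsplit i j,
    Finset.sum_add_distrib, Finset.sum_ite_eq, Finset.mem_univ, if_true]
  rw [Finset.sum_comm (f := fun i j => if j < i then f j i else 0), two_nsmul]

theorem sum_sum_sub_sq {R : Type*} [CommRing R] (x : ι → R) :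
    ∑ i, ∑ j, (x i - x j) ^ 2 = 2 * Fintype.card ι * ∑ i, x i ^ 2 - 2 * (∑ i, x i) ^ 2 := by
  simp only [sub_sq, Finset.sum_add_distrib, Finset.sum_sub_distrib, Finset.sum_const,
    Finset.card_univ, nsmul_eq_mul, ← Finset.mul_sum, ← Finset.sum_mul]
  ring

/-- The objective `g` with `m - 2` replaced by an arbitrary weight `K`. -/
noncomputable def pairObjective [LinearOrder ι] (K : ℝ) (a : ι → ℝ) : ℝ :=
  ∑ i, ∑ j, if i < j then (K * a i + 1) ^ 2 + (K * a j + 1) ^ 2 + K * (a i - a j) ^ 2 else 0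

theorem pairObjective_eq_of_sum_eq [LinearOrder ι] (K c : ℝ) (a : ι → ℝ)
    (hsum : ∑ i, a i = Fintype.card ι * c) :
    pairObjective K a = (Fintype.card ι - 1) * Fintype.card ι * (K * c + 1) ^ 2
      + K * ((Fintype.card ι - 1) * K + Fintype.card ι) * ∑ i, (a i - c) ^ 2 := by
  set n : ℝ := (Fintype.card ι : ℝ)
  set S := ∑ i, (a i - c) ^ 2
  have hcentred : ∑ i, (a i - c) = 0 := by
    rw [Finset.sum_sub_distrib, hsum, Finset.sum_const, Finset.card_univ, nsmul_eq_mul, sub_self]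
  have hdiff : ∑ i, ∑ j, (a i - a j) ^ 2 = 2 * n * S := by
    simpa [hcentred, S] using sum_sum_sub_sq (fun i => a i - c)
  have hsq : ∑ i, (K * a i + 1) ^ 2 = n * (K * c + 1) ^ 2 + K ^ 2 * S := by
    have h : ∀ i, (K * a i + 1) ^ 2 = (K * c + 1) ^ 2 + 2 * K * (K * c + 1) * (a i - c)
        + K ^ 2 * (a i - c) ^ 2 := fun i => by ring
    simp only [h, Finset.sum_add_distrib, ← Finset.mul_sum, hcentred, Finset.sum_const,
      Finset.card_univ, nsmul_eq_mul, S]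
    ring
  have hpairs := sum_sum_symm_eq_two_nsmul_sum_lt_add_diag
    (fun i j => (K * a i + 1) ^ 2 + (K * a j + 1) ^ 2 + K * (a i - a j) ^ 2) (fun i j => by ring)
  simp only [Finset.sum_add_distrib, ← Finset.mul_sum, Finset.sum_const, Finset.card_univ,
    nsmul_eq_mul, sub_self, hdiff, hsq] at hpairs
  unfold pairObjective
  linear_combination (-1 / 2 : ℝ) * hpairs

end PairSums

theorem stmt_18 (m : ℕ) (hm : 3 ≤ m) (a : Fin m → ℝ)
    (hsum : ∑ i, a i = (m : ℝ) * ((m : ℝ) + 1) / 2) :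
    ((∑ i, ∑ j, if i < j then
        (((m : ℝ) - 2) * a i + 1)^2 + (((m : ℝ) - 2) * a j + 1)^2
          + ((m : ℝ) - 2) * (a i - a j)^2
      else 0)
      ≥ (m : ℝ)^3 * ((m : ℝ) - 1)^3 / 4) ∧
    ((∑ i, ∑ j, if i < j then
        (((m : ℝ) - 2) * a i + 1)^2 + (((m : ℝ) - 2) * a j + 1)^2
          + ((m : ℝ) - 2) * (a i - a j)^2
      else 0)
      = (m : ℝ)^3 * ((m : ℝ) - 1)^3 / 4
      ↔ ∀ i, a i = ((m : ℝ) + 1) / 2) := by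
  have hid := pairObjective_eq_of_sum_eq ((m : ℝ) - 2) (((m : ℝ) + 1) / 2) a
    (by rw [Fintype.card_fin, hsum]; ring)
  rw [pairObjective, Fintype.card_fin] at hid
  have hm' : (3 : ℝ) ≤ m := by exact_mod_cast hm
  have hcoeff : 0 < ((m : ℝ) - 2) * (((m : ℝ) - 1) * ((m : ℝ) - 2) + m) := by
    apply mul_pos <;> nlinarith
  have hS : 0 ≤ ∑ i, (a i - ((m : ℝ) + 1) / 2) ^ 2 := Finset.sum_nonneg fun i _ => sq_nonneg _
  have hconst : ((m : ℝ) - 1) * m * (((m : ℝ) - 2) * (((m : ℝ) + 1) / 2) + 1) ^ 2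
      = (m : ℝ) ^ 3 * ((m : ℝ) - 1) ^ 3 / 4 := by ring
  rw [hid, hconst]
  refine ⟨le_add_of_nonneg_right (mul_nonneg hcoeff.le hS), ?_⟩
  rw [add_eq_left, mul_eq_zero, or_iff_right hcoeff.ne',
    Finset.sum_eq_zero_iff_of_nonneg fun i _ => sq_nonneg _]
  simp [sub_eq_zero]
end
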